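/- arXiv:2010.04055 — 9 statements merged into one kernel-verified Lean document; each statement's English description precedes it below -/
import Mathlib

section
/- Closed form of the Shapley interaction via the merged game: let Ω be a finite set with |Ω| = n ≥ 2, v a value function on subsets of Ω, and i, j ∈ Ω distinct. Consider the (n−1)-player game on Ω\{j} with value function w(S) = v(S∪{j}) if i ∈ S and w(S) = v(S) otherwise (i.e. i and j are merged into a singleton player). Then φ_w(i|Ω\{j}) − φ_{v'}(i|Ω\{j}) − φ_{v''}(j|Ω\{i}) = ∑_{S ⊆ Ω\{i,j}} [|S|!·(n−|S|−2)!/(n−1)!]·(v(S∪{i,j}) − v(S∪{i}) − v(S∪{j}) + v(S)), where v' is v restricted to subsets of Ω\{j} and v'' is v restricted to subsets of Ω\{i}. -/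
open Finset

/-- The Shapley value of player `i` in the cooperative game on `Ω` with value function `v`. -/
noncomputable def shapleyValue {α : Type*} [DecidableEq α] (Ω : Finset α)
    (v : Finset α → ℝ) (i : α) : ℝ :=
  ∑ S ∈ (Ω.erase i).powerset,
    ((Nat.factorial S.card * Nat.factorial (Ω.card - S.card - 1) : ℕ) : ℝ) /
        (Nat.factorial Ω.card : ℝ) * (v (insert i S) - v S)

/-- Closed form of the Shapley interaction via the merged game: for distinct `i, j ∈ Ω`
(`|Ω| = n ≥ 2`), consider the `(n−1)`-player game on `Ω\{j}` with value function
`w(S) = v(S∪{j})` if `i ∈ S` and `w(S) = v(S)` otherwise (`i` and `j` merged into a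
singleton player). Then
`φ_w(i|Ω\{j}) − φ_{v'}(i|Ω\{j}) − φ_{v''}(j|Ω\{i})
  = ∑_{S ⊆ Ω\{i,j}} [|S|!·(n−|S|−2)!/(n−1)!]·(v(S∪{i,j}) − v(S∪{i}) − v(S∪{j}) + v(S))`,
where `v'` (resp. `v''`) is `v` restricted to subsets of `Ω\{j}` (resp. `Ω\{i}`). -/
theorem shapley_interaction_closed_form {α : Type*} [DecidableEq α] (Ω : Finset α)
    (hn : 2 ≤ Ω.card) (v : Finset α → ℝ) (i j : α) (hi : i ∈ Ω) (hj : j ∈ Ω) (hij : i ≠ j)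
    (w : Finset α → ℝ) (hw : ∀ S : Finset α, w S = if i ∈ S then v (insert j S) else v S) :
    shapleyValue (Ω.erase j) w i - shapleyValue (Ω.erase j) v i
        - shapleyValue (Ω.erase i) v j =
      ∑ S ∈ ((Ω.erase i).erase j).powerset,
        ((Nat.factorial S.card * Nat.factorial (Ω.card - S.card - 2) : ℕ) : ℝ) /
            (Nat.factorial (Ω.card - 1) : ℝ) *
          (v (insert i (insert j S)) - v (insert i S) - v (insert j S) + v S) := by
  have hE : (Ω.erase j).erase i = (Ω.erase i).erase j := Finset.erase_right_comm
  have hcj : (Ω.erase j).card = Ω.card - 1 := Finset.card_erase_of_mem hj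
  have hci : (Ω.erase i).card = Ω.card - 1 := Finset.card_erase_of_mem hi
  unfold shapleyValue
  rw [hE, ← Finset.sum_sub_distrib, ← Finset.sum_sub_distrib]
  refine Finset.sum_congr rfl fun S hS => ?_
  rw [Finset.mem_powerset] at hS
  have hiS : i ∉ S := fun h => Finset.notMem_erase i Ω (Finset.mem_of_mem_erase (hS h))
  have hjS : j ∉ S := fun h => Finset.notMem_erase j Ω
    (Finset.mem_of_mem_erase (hE ▸ hS h))
  have hw1 : w (insert i S) = v (insert i (insert j S)) := by
    rw [hw, if_pos (Finset.mem_insert_self i S), Finset.insert_comm]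
  have hw2 : w S = v S := by rw [hw, if_neg hiS]
  rw [hw1, hw2, hcj, hci]
  have h1 : Ω.card - 1 - S.card - 1 = Ω.card - S.card - 2 := by omega
  rw [h1]
  ring
end

section
/- Equivalence of the two definitions of the Shapley interaction: let Ω be a finite set with |Ω| = n ≥ 2, v a value function on subsets of Ω, and i, j ∈ Ω distinct. Let φ_{i,w/j} denote the Shapley value of player i in the (n−1)-player game on Ω\{j} with value function S ↦ v(S∪{j}) (player j always present), and let φ_{i,w/o j} denote the Shapley value of player i in the (n−1)-player game on Ω\{j} with value function S ↦ v(S) (player j always absent). Then I_{ij}(v) = φ_{i,w/j} − φ_{i,w/o j}. -/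
open Finset

/-- The Shapley interaction between distinct players `i, j ∈ Ω` (`|Ω| = n ≥ 2`):
`I_{ij}(v) = ∑_{S ⊆ Ω\{i,j}} [|S|!·(n−|S|−2)!/(n−1)!]·(v(S∪{i,j}) − v(S∪{i}) − v(S∪{j}) + v(S))`. -/
noncomputable def shapleyInteraction {α : Type*} [DecidableEq α] (Ω : Finset α)
    (v : Finset α → ℝ) (i j : α) : ℝ :=
  ∑ S ∈ ((Ω.erase i).erase j).powerset,
    ((Nat.factorial S.card * Nat.factorial (Ω.card - S.card - 2) : ℕ) : ℝ) /
        (Nat.factorial (Ω.card - 1) : ℝ) *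
      (v (insert i (insert j S)) - v (insert i S) - v (insert j S) + v S)

/-- Equivalence of the two definitions of the Shapley interaction: for distinct `i, j ∈ Ω`,
`I_{ij}(v) = φ_{i,w/ j} − φ_{i,w/o j}`, where `φ_{i,w/ j}` is the Shapley value of `i` in the
`(n−1)`-player game on `Ω\{j}` with value function `S ↦ v(S∪{j})` (player `j` always present),
and `φ_{i,w/o j}` is the Shapley value of `i` in the game on `Ω\{j}` with value function
`S ↦ v(S)` (player `j` always absent). -/
theorem shapley_interaction_eq_diff {α : Type*} [DecidableEq α] (Ω : Finset α)
    (hn : 2 ≤ Ω.card) (v : Finset α → ℝ) (i j : α) (hi : i ∈ Ω) (hj : j ∈ Ω) (hij : i ≠ j) :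
    shapleyInteraction Ω v i j =
      shapleyValue (Ω.erase j) (fun S => v (insert j S)) i -
        shapleyValue (Ω.erase j) (fun S => v S) i := by
  unfold shapleyInteraction shapleyValue
  rw [Finset.card_erase_of_mem hj, Finset.erase_right_comm, ← Finset.sum_sub_distrib]
  refine Finset.sum_congr rfl fun S hS => ?_
  have h2 : Ω.card - 1 - S.card - 1 = Ω.card - S.card - 2 := by omega
  rw [h2, Finset.insert_comm]
  simp only []
  ring
end

section
/- Row-sum formula for the expected interaction (Equation (4) of the paper): let Ω be a finite set with |Ω| = n ≥ 2 and v a value function on subsets of Ω. Then for every i ∈ Ω, ∑_{j ∈ Ω\{i}} I_{ij}(v) = v(Ω) − v(Ω\{i}) − v({i}) + v(∅). Consequently the average interaction over all ordered pairs of distinct players equals (1/(n−1)) times the average over i of v(Ω) − v(Ω\{i}) − v({i}) + v(∅). -/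
/-!
Fix `i` and write `Δ T = v (T ∪ {i}) - v T` for `T ⊆ A = Ω \ {i}`. Each `I_{ij}` is a weighted
sum of differences `Δ (S ∪ {j}) - Δ S`, so summing over `j ∈ A` and counting, for each `T ⊆ A`,
the `j` with `T = S ∪ {j}` (there are `|T|`) and those with `T = S` (there are `|A| - |T|`)
gives `∑_T c_T Δ T`. With the Shapley weights both contributions to `c_T` equal `1 / C(|A|, |T|)`,
so they cancel except at `T = A` and `T = ∅`, leaving `Δ A - Δ ∅`.
-/

open Finset

open scoped Nat

namespace Finset

variable {α β : Type*} [DecidableEq α]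

theorem sum_sum_powerset_erase [AddCommMonoid β] (A : Finset α) (f : Finset α → β) :
    ∑ j ∈ A, ∑ S ∈ (A.erase j).powerset, f S = ∑ T ∈ A.powerset, (#A - #T) • f T := by
  rw [sum_comm' (t' := A.powerset) (s' := (A \ ·))]
  · refine sum_congr rfl fun T hT => ?_
    rw [sum_const, card_sdiff_of_subset (mem_powerset.mp hT)]
  · intro j T
    simp only [mem_powerset, subset_erase, mem_sdiff]
    tauto

theorem sum_sum_powerset_erase_insert [AddCommMonoid β] (A : Finset α) (f : Finset α → β) :
    ∑ j ∈ A, ∑ S ∈ (A.erase j).powerset, f (insert j S) = ∑ T ∈ A.powerset, #T • f T := by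
  have hinsert : ∀ j ∈ A, ∑ S ∈ (A.erase j).powerset, f (insert j S)
      = ∑ T ∈ A.powerset with j ∈ T, f T := by
    intro j hj
    refine sum_nbij' (insert j) (erase · j) ?_ ?_ ?_ ?_ fun _ _ => rfl
    · intro S hS
      rw [mem_powerset, subset_erase] at hS
      rw [mem_filter, mem_powerset]
      exact ⟨insert_subset hj hS.1, mem_insert_self j S⟩
    · intro T hT
      rw [mem_filter, mem_powerset] at hT
      rw [mem_powerset, subset_erase]
      exact ⟨(erase_subset j T).trans hT.1, notMem_erase j T⟩
    · intro S hS
      exact erase_insert fun hjS => notMem_erase j A (mem_powerset.mp hS hjS)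
    · intro T hT
      exact insert_erase (mem_filter.mp hT).2
  rw [sum_congr rfl hinsert, sum_comm' (t' := A.powerset) (s' := id)]
  · simp only [id, sum_const]
  · intro j T
    simp only [mem_filter, mem_powerset, id]
    constructor
    · rintro ⟨hj, hTA, hjT⟩; exact ⟨hjT, hTA⟩
    · rintro ⟨hjT, hTA⟩; exact ⟨hTA hjT, hTA, hjT⟩

theorem sum_sum_powerset_erase_mul_sub {R : Type*} [CommRing R] (A : Finset α) (w : ℕ → R)
    (f : Finset α → R) :
    ∑ j ∈ A, ∑ S ∈ (A.erase j).powerset, w #S * (f (insert j S) - f S)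
      = ∑ T ∈ A.powerset, (#T * w (#T - 1) - (#A - #T : ℕ) * w #T) * f T := by
  have hcard : ∀ j ∈ A, ∀ S ∈ (A.erase j).powerset, w #S = w (#(insert j S) - 1) := by
    intro j _ S hS
    rw [card_insert_of_notMem fun hj => notMem_erase j A (mem_powerset.mp hS hj),
      add_tsub_cancel_right]
  simp_rw [mul_sub, sum_sub_distrib]
  rw [sum_congr rfl fun j hj => sum_congr rfl fun S hS => by rw [hcard j hj S hS],
    sum_sum_powerset_erase_insert A (fun T => w (#T - 1) * f T),
    sum_sum_powerset_erase A (fun T => w #T * f T), ← sum_sub_distrib]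
  refine sum_congr rfl fun T _ => ?_
  rw [nsmul_eq_mul, nsmul_eq_mul]
  ring

end Finset

noncomputable def shapleyWeight (n s : ℕ) : ℝ :=
  ((s ! * (n - s - 2)! : ℕ) : ℝ) / ((n - 1)! : ℝ)

theorem shapleyInteraction_eq_sum_shapleyWeight {α : Type*} [DecidableEq α] (Ω : Finset α)
    (v : Finset α → ℝ) (i j : α) :
    shapleyInteraction Ω v i j = ∑ S ∈ ((Ω.erase i).erase j).powerset,
      shapleyWeight #Ω #S *
        ((v (insert i (insert j S)) - v (insert j S)) - (v (insert i S) - v S)) := by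
  refine sum_congr rfl fun S _ => ?_
  rw [shapleyWeight]
  ring

theorem mul_shapleyWeight_pred_sub_mul_shapleyWeight {n t : ℕ} (ht : t < n) :
    t * shapleyWeight n (t - 1) - (n - 1 - t : ℕ) * shapleyWeight n t
      = (if t = n - 1 then 1 else 0) - (if t = 0 then 1 else 0) := by
  set c : ℝ := ((t ! * (n - 1 - t)! : ℕ) : ℝ) / ((n - 1)! : ℝ)
  have hfact : ((n - 1)! : ℝ) ≠ 0 := by positivity
  have hlow : t * shapleyWeight n (t - 1) = if t = 0 then 0 else c := by
    split_ifs with h0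
    · simp [h0]
    · obtain ⟨s, rfl⟩ := Nat.exists_eq_succ_of_ne_zero h0
      rw [shapleyWeight, show n - (s + 1 - 1) - 2 = n - 1 - (s + 1) by omega]
      simp only [c, Nat.factorial_succ]
      push_cast
      ring
  have hhigh : (n - 1 - t : ℕ) * shapleyWeight n t = if t = n - 1 then 0 else c := by
    split_ifs with hm
    · simp [hm]
    · obtain ⟨k, hk⟩ : ∃ k, n - 1 - t = k + 1 := Nat.exists_eq_succ_of_ne_zero (by omega)
      rw [shapleyWeight, show n - t - 2 = k by omega, hk]
      simp only [c, hk, Nat.factorial_succ]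
      push_cast
      ring
  have hc_zero : t = 0 → c = 1 := by
    rintro rfl
    simp [c, hfact]
  have hc_top : t = n - 1 → c = 1 := by
    rintro rfl
    simp [c, hfact]
  rw [hlow, hhigh]
  split_ifs <;> simp_all

theorem sum_shapleyInteraction_erase {α : Type*} [DecidableEq α] {Ω : Finset α} {i : α}
    (hi : i ∈ Ω) (v : Finset α → ℝ) :
    ∑ j ∈ Ω.erase i, shapleyInteraction Ω v i j = v Ω - v (Ω.erase i) - v {i} + v ∅ := by
  set A := Ω.erase i
  set Δ : Finset α → ℝ := fun T => v (insert i T) - v T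
  have hA : #A = #Ω - 1 := card_erase_of_mem hi
  have hcoeff : ∀ T ∈ A.powerset, (#T * shapleyWeight #Ω (#T - 1)
      - (#A - #T : ℕ) * shapleyWeight #Ω #T) * Δ T
        = ((if T = A then 1 else 0) - (if T = ∅ then 1 else 0)) * Δ T := by
    intro T hT
    have hTA : T ⊆ A := mem_powerset.mp hT
    have hlt : #T < #Ω := (card_le_card hTA).trans_lt (card_erase_lt_of_mem hi)
    have htop : #T = #A ↔ T = A := ⟨fun h => eq_of_subset_of_card_le hTA h.ge, congrArg card⟩
    rw [hA, mul_shapleyWeight_pred_sub_mul_shapleyWeight hlt, ← hA]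
    simp only [htop, Finset.card_eq_zero]
  calc ∑ j ∈ A, shapleyInteraction Ω v i j
      = ∑ j ∈ A, ∑ S ∈ (A.erase j).powerset,
          shapleyWeight #Ω #S * (Δ (insert j S) - Δ S) :=
        sum_congr rfl fun j _ => shapleyInteraction_eq_sum_shapleyWeight Ω v i j
    _ = ∑ T ∈ A.powerset, ((if T = A then 1 else 0) - (if T = ∅ then 1 else 0)) * Δ T := by
        rw [sum_sum_powerset_erase_mul_sub, sum_congr rfl hcoeff]
    _ = Δ A - Δ ∅ := by
        simp only [sub_mul, ite_mul, one_mul, zero_mul, sum_sub_distrib, sum_ite_eq',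
          mem_powerset_self, empty_mem_powerset, if_true]
    _ = v Ω - v (Ω.erase i) - v {i} + v ∅ := by
        simp only [Δ, A, insert_erase hi, insert_empty_eq]
        ring

theorem shapley_interaction_row_sum_general {α : Type*} [DecidableEq α] (Ω : Finset α)
    (v : Finset α → ℝ) :
    (∀ i ∈ Ω, ∑ j ∈ Ω.erase i, shapleyInteraction Ω v i j
        = v Ω - v (Ω.erase i) - v {i} + v ∅) ∧
    (1 / ((Ω.card : ℝ) * ((Ω.card : ℝ) - 1))) *
        ∑ i ∈ Ω, ∑ j ∈ Ω.erase i, shapleyInteraction Ω v i j =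
      (1 / ((Ω.card : ℝ) - 1)) *
        ((1 / (Ω.card : ℝ)) * ∑ i ∈ Ω, (v Ω - v (Ω.erase i) - v {i} + v ∅)) := by
  refine ⟨fun i hi => sum_shapleyInteraction_erase hi v, ?_⟩
  rw [sum_congr rfl fun i hi => sum_shapleyInteraction_erase hi v, one_div, mul_inv]
  ring

/-- Row-sum formula for the expected interaction (Equation (4) of the paper): for every
`i ∈ Ω`, `∑_{j ∈ Ω\{i}} I_{ij}(v) = v(Ω) − v(Ω\{i}) − v({i}) + v(∅)`. Consequently the
average interaction over all ordered pairs of distinct players equals `1/(n−1)` times the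
average over `i` of `v(Ω) − v(Ω\{i}) − v({i}) + v(∅)`. -/
theorem shapley_interaction_row_sum {α : Type*} [DecidableEq α] (Ω : Finset α)
    (hn : 2 ≤ Ω.card) (v : Finset α → ℝ) :
    (∀ i ∈ Ω, ∑ j ∈ Ω.erase i, shapleyInteraction Ω v i j
        = v Ω - v (Ω.erase i) - v {i} + v ∅) ∧
    (1 / ((Ω.card : ℝ) * ((Ω.card : ℝ) - 1))) *
        ∑ i ∈ Ω, ∑ j ∈ Ω.erase i, shapleyInteraction Ω v i j =
      (1 / ((Ω.card : ℝ) - 1)) *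
        ((1 / (Ω.card : ℝ)) * ∑ i ∈ Ω, (v Ω - v (Ω.erase i) - v {i} + v ∅)) :=
  shapley_interaction_row_sum_general Ω v
end

section
/- Shapley interaction for a quadratic utility (exact form of the paper's Lemma 1): let Ω be a finite index set with |Ω| = n ≥ 2, let δ, g : Ω → ℝ, let H : Ω × Ω → ℝ be symmetric (H_{ab} = H_{ba}), let c₀ ∈ ℝ, and define the value function v(S) = c₀ + ∑_{a ∈ S} g_a·δ_a + (1/2)·∑_{a ∈ S}∑_{b ∈ S} δ_a·H_{ab}·δ_b for each subset S ⊆ Ω. Then for all distinct a, b ∈ Ω, the Shapley interaction satisfies I_{ab}(v) = δ_a·H_{ab}·δ_b. -/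
open Finset

/-- Shapley interaction for a quadratic utility (exact form of the paper's Lemma 1): if
`v(S) = c₀ + ∑_{a ∈ S} g_a·δ_a + (1/2)·∑_{a ∈ S}∑_{b ∈ S} δ_a·H_{ab}·δ_b` with `H` symmetric,
then for all distinct `a, b ∈ Ω`, `I_{ab}(v) = δ_a·H_{ab}·δ_b`. -/
theorem shapley_interaction_quadratic {α : Type*} [DecidableEq α] (Ω : Finset α)
    (hn : 2 ≤ Ω.card) (δ g : α → ℝ) (H : α → α → ℝ) (hH : ∀ a b, H a b = H b a) (c₀ : ℝ)
    (v : Finset α → ℝ)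
    (hv : ∀ S : Finset α,
      v S = c₀ + ∑ a ∈ S, g a * δ a + (1 / 2) * ∑ a ∈ S, ∑ b ∈ S, δ a * H a b * δ b)
    (a b : α) (ha : a ∈ Ω) (hb : b ∈ Ω) (hab : a ≠ b) :
    shapleyInteraction Ω v a b = δ a * H a b * δ b := by
  classical
  set n := Ω.card with hn'
  set T := (Ω.erase a).erase b with hT
  have hbe : b ∈ Ω.erase a := mem_erase.mpr ⟨fun h => hab h.symm, hb⟩
  have hTcard : T.card = n - 2 := by
    rw [hT, card_erase_of_mem hbe, card_erase_of_mem ha, ← hn']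
    omega
  -- second difference
  have hdiff : ∀ S : Finset α, S ∈ T.powerset →
      v (insert a (insert b S)) - v (insert a S) - v (insert b S) + v S
        = δ a * H a b * δ b := by
    intro S hS
    rw [mem_powerset] at hS
    have haS : a ∉ S := fun h => (mem_erase.mp (mem_erase.mp (hS h)).2).1 rfl
    have hbS : b ∉ S := fun h => (mem_erase.mp (hS h)).1 rfl
    have habS : a ∉ insert b S := by simp [hab, haS]
    simp only [hv, sum_insert habS, sum_insert haS, sum_insert hbS, sum_add_distrib]
    rw [hH b a]
    ring
  have hco : ∑ S ∈ T.powerset,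
      ((Nat.factorial S.card * Nat.factorial (n - S.card - 2) : ℕ) : ℝ) /
        (Nat.factorial (n - 1) : ℝ) = 1 := by
    have := Finset.sum_powerset_apply_card
      (fun m => ((Nat.factorial m * Nat.factorial (n - m - 2) : ℕ) : ℝ) /
        (Nat.factorial (n - 1) : ℝ)) (x := T)
    rw [this, hTcard]
    have hfac : ∀ m ∈ range (n - 2 + 1),
        (n - 2).choose m • (((Nat.factorial m * Nat.factorial (n - m - 2) : ℕ) : ℝ) /
          (Nat.factorial (n - 1) : ℝ))
        = ((Nat.factorial (n - 2) : ℕ) : ℝ) / (Nat.factorial (n - 1) : ℝ) := by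
      intro m hm
      rw [mem_range, Nat.lt_succ_iff] at hm
      have h1 : n - m - 2 = n - 2 - m := by omega
      have h3 : (n - 2).choose m * (m.factorial * (n - 2 - m).factorial)
          = (n - 2).factorial := by
        rw [← mul_assoc]; exact Nat.choose_mul_factorial_mul_factorial hm
      rw [h1, nsmul_eq_mul, ← mul_div_assoc, ← Nat.cast_mul, h3]
    rw [Finset.sum_congr rfl hfac, Finset.sum_const, Finset.card_range, nsmul_eq_mul]
    have h2 : (n - 1).factorial = (n - 2 + 1) * (n - 2).factorial := by
      have : n - 1 = n - 2 + 1 := by omega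
      rw [this, Nat.factorial_succ]
    have hpos : ((n - 2).factorial : ℝ) ≠ 0 := by positivity
    have hpos2 : ((n - 2 + 1 : ℕ) : ℝ) ≠ 0 := by positivity
    have h4 : ((n : ℝ) - 2 + 1) ≠ 0 := by
      have : (2 : ℝ) ≤ (n : ℝ) := by exact_mod_cast hn
      linarith
    rw [h2, Nat.cast_mul, div_mul_eq_div_div]
    field_simp
  unfold shapleyInteraction
  rw [Finset.sum_congr rfl (fun S hS => by rw [hdiff S hS]), ← Finset.sum_mul, ← hT, ← hn', hco,
    one_mul]
end

section
/- Exact decomposition underlying Proposition 1: let H be a symmetric n × n real matrix, g ∈ ℝⁿ, α ∈ ℝ, and m a natural number. Set c = α²·m·(m−1)/2, P = α·m·g + c·(Hg) (the second-order expansion of the multi-step perturbation) and Q = α·m·g (the single-step perturbation with matched step size). Then ∑_{a≠b} H_{ab}·(P_a·P_b − Q_a·Q_b) = α³·(m−1)·m²·∑_{b=1}^{n} (Hg)_b·((Hg)_b − g_b·H_{bb}) + c²·∑_{a≠b} H_{ab}·(Hg)_a·(Hg)_b. -/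
open Finset

/-- Exact decomposition underlying Proposition 1: for a symmetric `n × n` real matrix `H`,
`g ∈ ℝⁿ`, `α ∈ ℝ`, `m ∈ ℕ`, with `c = α²·m·(m−1)/2`, `P = α·m·g + c·(Hg)` and `Q = α·m·g`,
one has `∑_{a≠b} H_{ab}·(P_a·P_b − Q_a·Q_b)
  = α³·(m−1)·m²·∑_b (Hg)_b·((Hg)_b − g_b·H_{bb}) + c²·∑_{a≠b} H_{ab}·(Hg)_a·(Hg)_b`. -/
theorem multi_vs_single_interaction_decomposition (n : ℕ)
    (H : Matrix (Fin n) (Fin n) ℝ) (hH : ∀ a b, H a b = H b a)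
    (g : Fin n → ℝ) (α : ℝ) (m : ℕ)
    (c : ℝ) (hc : c = α ^ 2 * (m : ℝ) * ((m : ℝ) - 1) / 2)
    (P Q : Fin n → ℝ)
    (hP : P = (α * (m : ℝ)) • g + c • H.mulVec g)
    (hQ : Q = (α * (m : ℝ)) • g) :
    ∑ a : Fin n, ∑ b ∈ Finset.univ.erase a, H a b * (P a * P b - Q a * Q b) =
      α ^ 3 * ((m : ℝ) - 1) * (m : ℝ) ^ 2 *
          ∑ b : Fin n, H.mulVec g b * (H.mulVec g b - g b * H b b) +
        c ^ 2 * ∑ a : Fin n, ∑ b ∈ Finset.univ.erase a,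
          H a b * (H.mulVec g a * H.mulVec g b) := by
  set u := H.mulVec g with hu
  have hua : ∀ a, ∑ b, H a b * g b = u a := by
    intro a; rw [hu]; simp [Matrix.mulVec, dotProduct]
  have hub : ∀ b, ∑ a, H a b * g a = u b := by
    intro b
    rw [← hua b]
    exact Finset.sum_congr rfl fun a _ => by rw [hH a b]
  have hsplit : ∀ (F : Fin n → Fin n → ℝ),
      (∑ a, ∑ b ∈ Finset.univ.erase a, F a b)
        = (∑ a, ∑ b, F a b) - ∑ a, F a a := by
    intro F
    rw [← Finset.sum_sub_distrib]
    exact Finset.sum_congr rfl fun a _ => Finset.sum_erase_eq_sub (Finset.mem_univ a)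
  rw [hsplit, hsplit]
  have e1 : (∑ a, ∑ b, H a b * (P a * P b - Q a * Q b))
      = (α * m * c) * (∑ b, u b * u b) + (α * m * c) * (∑ a, u a * u a)
        + c ^ 2 * ∑ a, ∑ b, H a b * (u a * u b) := by
    have : ∀ a b, H a b * (P a * P b - Q a * Q b)
        = (α * m * c) * (H a b * g a * u b) + (α * m * c) * (H a b * g b * u a)
          + c ^ 2 * (H a b * (u a * u b)) := by
      intro a b
      simp only [hP, hQ, Pi.add_apply, Pi.smul_apply, smul_eq_mul]
      ring
    have s1 : (∑ a, ∑ b, H a b * g a * u b) = ∑ b, u b * u b := by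
      rw [Finset.sum_comm]
      refine Finset.sum_congr rfl fun b _ => ?_
      rw [← hub b, Finset.sum_mul]
    have s2 : (∑ a, ∑ b, H a b * g b * u a) = ∑ a, u a * u a := by
      refine Finset.sum_congr rfl fun a _ => ?_
      rw [← hua a, Finset.sum_mul]
    simp only [this, Finset.sum_add_distrib, ← Finset.mul_sum, s1, s2]
  have e2 : (∑ a, H a a * (P a * P a - Q a * Q a))
      = (α * m * c) * (∑ a, H a a * g a * u a) + (α * m * c) * (∑ a, H a a * g a * u a)
        + c ^ 2 * ∑ a, H a a * (u a * u a) := by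
    simp only [Finset.mul_sum]
    rw [← Finset.sum_add_distrib, ← Finset.sum_add_distrib]
    refine Finset.sum_congr rfl fun a _ => ?_
    simp only [hP, hQ, Pi.add_apply, Pi.smul_apply, smul_eq_mul]
    ring
  rw [e1, e2]
  have e3 : (∑ b, u b * (u b - g b * H b b))
      = (∑ b, u b * u b) - ∑ b, H b b * g b * u b := by
    rw [← Finset.sum_sub_distrib]
    exact Finset.sum_congr rfl fun b _ => by ring
  rw [e3, hc]
  ring
end

section
/- Proposition 1 (multi-step attacks yield larger interactions than single-step attacks; precise second-order form): let H be a symmetric n × n real matrix, g ∈ ℝⁿ, α ≥ 0, and m ≥ 1 a natural number. Set c = α²·m·(m−1)/2, P = α·m·g + c·(Hg) (the second-order expansion of the multi-step perturbation) and Q = α·m·g (the single-step perturbation with matched step size). Assume (i) for every index b, (Hg)_b·((Hg)_b − g_b·H_{bb}) ≥ 0 (the paper's dominance assumption that the full gradient-weighted column sum dominates its diagonal term), and (ii) ∑_{a≠b} H_{ab}·(Hg)_a·(Hg)_b ≥ 0 (the paper's Assumption 1 that higher-order Hessian terms do not reverse the sign). Then ∑_{a≠b} P_a·H_{ab}·P_b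 ≥ ∑_{a≠b} Q_a·H_{ab}·Q_b, i.e. the total pairwise interaction of the multi-step perturbation is at least that of the single-step perturbation. -/
open Finset

lemma swap_erase_sum {n : ℕ} (f : Fin n → Fin n → ℝ) :
    ∑ a : Fin n, ∑ b ∈ Finset.univ.erase a, f a b
      = ∑ b : Fin n, ∑ a ∈ Finset.univ.erase b, f a b := by
  rw [Finset.sum_comm' (s := Finset.univ) (t := fun a => Finset.univ.erase a)
    (t' := Finset.univ) (s' := fun b => Finset.univ.erase b)]
  intro a b
  constructor <;> (intro h; simp_all [eq_comm, ne_comm])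


/-- Proposition 1 (multi-step attacks yield larger interactions than single-step attacks;
precise second-order form): for a symmetric `n × n` real matrix `H`, `g ∈ ℝⁿ`, `α ≥ 0`,
`m ≥ 1`, with `c = α²·m·(m−1)/2`, `P = α·m·g + c·(Hg)` (multi-step, second order) and
`Q = α·m·g` (single-step with matched step size), and under assumptions
(i) `∀ b, (Hg)_b·((Hg)_b − g_b·H_{bb}) ≥ 0` and (ii) `∑_{a≠b} H_{ab}·(Hg)_a·(Hg)_b ≥ 0`,
one has `∑_{a≠b} P_a·H_{ab}·P_b ≥ ∑_{a≠b} Q_a·H_{ab}·Q_b`. -/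
theorem multi_step_interaction_ge_single_step (n : ℕ)
    (H : Matrix (Fin n) (Fin n) ℝ) (hH : ∀ a b, H a b = H b a)
    (g : Fin n → ℝ) (α : ℝ) (hα : 0 ≤ α) (m : ℕ) (hm : 1 ≤ m)
    (c : ℝ) (hc : c = α ^ 2 * (m : ℝ) * ((m : ℝ) - 1) / 2)
    (P Q : Fin n → ℝ)
    (hP : P = (α * (m : ℝ)) • g + c • H.mulVec g)
    (hQ : Q = (α * (m : ℝ)) • g)
    (hdom : ∀ b : Fin n, H.mulVec g b * (H.mulVec g b - g b * H b b) ≥ 0)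
    (hhigh : ∑ a : Fin n, ∑ b ∈ Finset.univ.erase a,
        H a b * (H.mulVec g a * H.mulVec g b) ≥ 0) :
    ∑ a : Fin n, ∑ b ∈ Finset.univ.erase a, P a * H a b * P b ≥
      ∑ a : Fin n, ∑ b ∈ Finset.univ.erase a, Q a * H a b * Q b := by
  set D := H.mulVec g with hD
  have hc0 : 0 ≤ c := by
    rw [hc]
    have h1 : (1:ℝ) ≤ (m:ℝ) := by exact_mod_cast hm
    nlinarith [mul_nonneg (mul_nonneg (sq_nonneg α) (by linarith : (0:ℝ) ≤ (m:ℝ))) (by linarith : (0:ℝ) ≤ (m:ℝ) - 1)]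
  have key : ∀ a b : Fin n, P a * H a b * P b =
      Q a * H a b * Q b + (α * m * c) * (g a * H a b * D b)
      + (α * m * c) * (D a * H a b * g b) + c ^ 2 * (H a b * (D a * D b)) := by
    intro a b
    simp only [hP, hQ, Pi.add_apply, Pi.smul_apply, smul_eq_mul, hD]
    ring
  have hrow : ∀ a : Fin n, ∑ b ∈ Finset.univ.erase a, H a b * g b
      = D a - H a a * g a := by
    intro a
    have : D a = ∑ b : Fin n, H a b * g b := by
      simp [hD, Matrix.mulVec, dotProduct]
    rw [Finset.sum_erase_eq_sub (Finset.mem_univ a), ← this]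
  -- S2 ≥ 0
  have hS2 : 0 ≤ ∑ a : Fin n, ∑ b ∈ Finset.univ.erase a, D a * H a b * g b := by
    have : ∀ a : Fin n, ∑ b ∈ Finset.univ.erase a, D a * H a b * g b
        = D a * (D a - H a a * g a) := by
      intro a
      rw [← hrow a, Finset.mul_sum]
      apply Finset.sum_congr rfl; intro b _; ring
    rw [Finset.sum_congr rfl (fun a _ => this a)]
    apply Finset.sum_nonneg
    intro a _
    have := hdom a
    nlinarith [hdom a]
  have hS1 : 0 ≤ ∑ a : Fin n, ∑ b ∈ Finset.univ.erase a, g a * H a b * D b := by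
    rw [swap_erase_sum]
    calc (0:ℝ) ≤ ∑ a : Fin n, ∑ b ∈ Finset.univ.erase a, D a * H a b * g b := hS2
    _ = ∑ b : Fin n, ∑ a ∈ Finset.univ.erase b, g a * H a b * D b := by
        apply Finset.sum_congr rfl; intro a _
        apply Finset.sum_congr rfl; intro b _
        rw [hH a b]; ring
  have hαm : 0 ≤ α * m * c := by positivity
  calc ∑ a : Fin n, ∑ b ∈ Finset.univ.erase a, P a * H a b * P b
      = ∑ a : Fin n, ∑ b ∈ Finset.univ.erase a, Q a * H a b * Q b
        + (α * m * c) * (∑ a : Fin n, ∑ b ∈ Finset.univ.erase a, g a * H a b * D b)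
        + (α * m * c) * (∑ a : Fin n, ∑ b ∈ Finset.univ.erase a, D a * H a b * g b)
        + c ^ 2 * (∑ a : Fin n, ∑ b ∈ Finset.univ.erase a, H a b * (D a * D b)) := by
        simp only [Finset.mul_sum, ← Finset.sum_add_distrib]
        apply Finset.sum_congr rfl; intro a _
        apply Finset.sum_congr rfl; intro b _
        exact key a b
    _ ≥ ∑ a : Fin n, ∑ b ∈ Finset.univ.erase a, Q a * H a b * Q b := by
        nlinarith [mul_nonneg hαm hS1, mul_nonneg hαm hS2,
          mul_nonneg (sq_nonneg c) hhigh]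
end

section
/- Let H be an n × n real matrix with H·H = 0, g ∈ ℝⁿ, and α ∈ ℝ. Define δ⁰ = 0, g_mi⁰ = 0, and for t ≥ 1: g_miᵗ = ((t−1)/t)·g_miᵗ⁻¹ + (1/t)·(g + H·δᵗ⁻¹) and δᵗ = δᵗ⁻¹ + α·g_miᵗ. Then for every t ≥ 1, g_miᵗ = g + (α·(t−1)/2)·(Hg) and δᵗ = α·t·g + (α²·t·(t−1)/4)·(Hg). -/
open Finset

/-- Closed form of the MI Attack iterates when second-order Hessian effects vanish
(`H·H = 0` formalizes the paper's Assumption 1): with `δ⁰ = 0`, `g_mi⁰ = 0`, and for `t ≥ 1`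
`g_miᵗ = ((t−1)/t)·g_miᵗ⁻¹ + (1/t)·(g + H·δᵗ⁻¹)` and `δᵗ = δᵗ⁻¹ + α·g_miᵗ`, one has for
every `t ≥ 1`: `g_miᵗ = g + (α·(t−1)/2)·(Hg)` and `δᵗ = α·t·g + (α²·t·(t−1)/4)·(Hg)`. -/
theorem mi_attack_closed_form (n : ℕ) (H : Matrix (Fin n) (Fin n) ℝ) (hH2 : H * H = 0)
    (g : Fin n → ℝ) (α : ℝ) (δ gmi : ℕ → Fin n → ℝ)
    (hδ0 : δ 0 = 0) (hg0 : gmi 0 = 0)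
    (hgrec : ∀ t : ℕ, 1 ≤ t →
      gmi t = (((t : ℝ) - 1) / (t : ℝ)) • gmi (t - 1)
        + (1 / (t : ℝ)) • (g + H.mulVec (δ (t - 1))))
    (hδrec : ∀ t : ℕ, 1 ≤ t → δ t = δ (t - 1) + α • gmi t) :
    ∀ t : ℕ, 1 ≤ t →
      gmi t = g + (α * ((t : ℝ) - 1) / 2) • H.mulVec g ∧
      δ t = (α * (t : ℝ)) • g + (α ^ 2 * (t : ℝ) * ((t : ℝ) - 1) / 4) • H.mulVec g := by
  have key : ∀ a b : ℝ, H.mulVec (a • g + b • H.mulVec g) = a • H.mulVec g := by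
    intro a b
    rw [Matrix.mulVec_add, Matrix.mulVec_smul, Matrix.mulVec_smul,
      Matrix.mulVec_mulVec, hH2]
    simp
  intro t ht
  induction t, ht using Nat.le_induction with
  | base =>
    have hg1 : gmi 1 = g := by
      have := hgrec 1 le_rfl
      simp [hδ0, hg0, Matrix.mulVec_zero] at this
      simpa using this
    have hd1 : δ 1 = α • g := by
      have := hδrec 1 le_rfl
      simp [hδ0, hg1] at this
      simpa using this
    constructor
    · rw [hg1]; norm_num
    · rw [hd1]; norm_num
  | succ t ht ih =>
    obtain ⟨ihg, ihd⟩ := ih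
    have ht1 : (t : ℝ) + 1 ≠ 0 := by positivity
    have hHδ : H.mulVec (δ t) = (α * (t : ℝ)) • H.mulVec g := by
      rw [ihd, key]
    have hgrec' := hgrec (t + 1) (by omega)
    have hδrec' := hδrec (t + 1) (by omega)
    simp only [Nat.add_sub_cancel, Nat.cast_add, Nat.cast_one] at hgrec' hδrec'
    rw [ihg, hHδ] at hgrec'
    constructor
    · rw [hgrec']; push_cast; match_scalars <;> field_simp <;> ring
    · rw [hδrec', hgrec', ihd]; push_cast; match_scalars <;> field_simp <;> ring
end

section
/- Proposition 3 (the MI Attack decreases interactions relative to the multi-step attack; precise second-order form): let H be a symmetric n × n real matrix, g ∈ ℝⁿ, α ≥ 0, and m ≥ 1 a natural number. Set c = α²·m·(m−1)/2 and c' = α²·m·(m−1)/4, and let P = α·m·g + c·(Hg) (the second-order expansion of the multi-step perturbation) and R = α·m·g + c'·(Hg) (the second-order expansion of the MI perturbation). Assume (i) for every index b, (Hg)_b·((Hg)_b − g_b·H_{bb}) ≥ 0, and (ii) ∑_{a≠b} H_{ab}·(Hg)_a·(Hg)_b ≥ 0. Then ∑_{a≠b} R_a·H_{ab}·R_b ≤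 ∑_{a≠b} P_a·H_{ab}·P_b, i.e. the total pairwise interaction of the MI perturbation is at most that of the plain multi-step perturbation. -/
open Finset

/-- Proposition 3 (the MI Attack decreases interactions relative to the multi-step attack;
precise second-order form): for a symmetric `n × n` real matrix `H`, `g ∈ ℝⁿ`, `α ≥ 0`,
`m ≥ 1`, with `c = α²·m·(m−1)/2`, `c' = α²·m·(m−1)/4`, `P = α·m·g + c·(Hg)` (multi-step) and
`R = α·m·g + c'·(Hg)` (MI), and under assumptions (i) `∀ b, (Hg)_b·((Hg)_b − g_b·H_{bb}) ≥ 0`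
and (ii) `∑_{a≠b} H_{ab}·(Hg)_a·(Hg)_b ≥ 0`, one has
`∑_{a≠b} R_a·H_{ab}·R_b ≤ ∑_{a≠b} P_a·H_{ab}·P_b`. -/
theorem mi_interaction_le_multi_step (n : ℕ)
    (H : Matrix (Fin n) (Fin n) ℝ) (hH : ∀ a b, H a b = H b a)
    (g : Fin n → ℝ) (α : ℝ) (hα : 0 ≤ α) (m : ℕ) (hm : 1 ≤ m)
    (c c' : ℝ) (hc : c = α ^ 2 * (m : ℝ) * ((m : ℝ) - 1) / 2)
    (hc' : c' = α ^ 2 * (m : ℝ) * ((m : ℝ) - 1) / 4)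
    (P R : Fin n → ℝ)
    (hP : P = (α * (m : ℝ)) • g + c • H.mulVec g)
    (hR : R = (α * (m : ℝ)) • g + c' • H.mulVec g)
    (hdom : ∀ b : Fin n, H.mulVec g b * (H.mulVec g b - g b * H b b) ≥ 0)
    (hhigh : ∑ a : Fin n, ∑ b ∈ Finset.univ.erase a,
        H a b * (H.mulVec g a * H.mulVec g b) ≥ 0) :
    ∑ a : Fin n, ∑ b ∈ Finset.univ.erase a, R a * H a b * R b ≤
      ∑ a : Fin n, ∑ b ∈ Finset.univ.erase a, P a * H a b * P b := by
  have hwdef : ∀ b, H.mulVec g b = ∑ a, H b a * g a := by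
    intro b; simp [Matrix.mulVec, dotProduct]
  set w := H.mulVec g with hw
  set t := α * (m : ℝ) with ht
  set k := α ^ 2 * (m : ℝ) * ((m : ℝ) - 1) / 4 with hkdef
  have hm1 : (1:ℝ) ≤ (m:ℝ) := by exact_mod_cast hm
  have hk : 0 ≤ k := by
    have h1 : 0 ≤ (m:ℝ) - 1 := by linarith
    have h2 : 0 ≤ (m:ℝ) := by positivity
    have h3 : 0 ≤ α ^ 2 := sq_nonneg α
    rw [hkdef]; positivity
  have hc2 : c = 2 * k := by rw [hc, hkdef]; ring
  have hc'2 : c' = k := by rw [hc', hkdef]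
  have hPv : ∀ a, P a = t * g a + 2 * k * w a := by
    intro a; rw [hP, hc2]; simp [ht]
  have hRv : ∀ a, R a = t * g a + k * w a := by
    intro a; rw [hR, hc'2]; simp [ht]
  -- column sums of H against g equal w
  have hcol : ∀ b, ∑ a, H a b * g a = w b := by
    intro b; rw [hwdef b]; exact Finset.sum_congr rfl fun a _ => by rw [hH]
  have hrow : ∀ a, ∑ b, H a b * g b = w a := by
    intro a; rw [hwdef a]
  have herase : ∀ (f : Fin n → Fin n → ℝ),
      ∑ a : Fin n, ∑ b ∈ Finset.univ.erase a, f a b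
        = (∑ a : Fin n, ∑ b : Fin n, f a b) - ∑ a : Fin n, f a a := by
    intro f
    rw [← Finset.sum_sub_distrib]
    exact Finset.sum_congr rfl fun a _ =>
      Finset.sum_erase_eq_sub (Finset.mem_univ a)
  have hSB : 0 ≤ ∑ a : Fin n, ∑ b ∈ Finset.univ.erase a, H a b * (g a * w b) := by
    have heq : ∑ a : Fin n, ∑ b ∈ Finset.univ.erase a, H a b * (g a * w b)
        = ∑ b : Fin n, w b * (w b - g b * H b b) := by
      rw [herase, Finset.sum_comm]
      rw [← Finset.sum_sub_distrib]
      refine Finset.sum_congr rfl fun b _ => ?_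
      have : ∑ a, H a b * (g a * w b) = (∑ a, H a b * g a) * w b := by
        rw [Finset.sum_mul]; exact Finset.sum_congr rfl fun a _ => by ring
      rw [this, hcol]; ring
    rw [heq]
    exact Finset.sum_nonneg fun b _ => hdom b
  have hSB' : 0 ≤ ∑ a : Fin n, ∑ b ∈ Finset.univ.erase a, H a b * (w a * g b) := by
    have heq : ∑ a : Fin n, ∑ b ∈ Finset.univ.erase a, H a b * (w a * g b)
        = ∑ a : Fin n, w a * (w a - g a * H a a) := by
      rw [herase, ← Finset.sum_sub_distrib]
      refine Finset.sum_congr rfl fun a _ => ?_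
      have : ∑ b, H a b * (w a * g b) = w a * ∑ b, H a b * g b := by
        rw [Finset.mul_sum]; exact Finset.sum_congr rfl fun b _ => by ring
      rw [this, hrow]; ring
    rw [heq]
    exact Finset.sum_nonneg fun a _ => hdom a
  have htk : 0 ≤ t * k := by
    have : 0 ≤ t := by rw [ht]; positivity
    exact mul_nonneg this hk
  have hkk : 0 ≤ 3 * k ^ 2 := by positivity
  have hdiff : (∑ a : Fin n, ∑ b ∈ Finset.univ.erase a, P a * H a b * P b)
      - (∑ a : Fin n, ∑ b ∈ Finset.univ.erase a, R a * H a b * R b)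
      = t * k * (∑ a : Fin n, ∑ b ∈ Finset.univ.erase a, H a b * (g a * w b))
        + t * k * (∑ a : Fin n, ∑ b ∈ Finset.univ.erase a, H a b * (w a * g b))
        + 3 * k ^ 2 * (∑ a : Fin n, ∑ b ∈ Finset.univ.erase a, H a b * (w a * w b)) := by
    rw [Finset.mul_sum, Finset.mul_sum, Finset.mul_sum, ← Finset.sum_sub_distrib,
      ← Finset.sum_add_distrib, ← Finset.sum_add_distrib]
    refine Finset.sum_congr rfl fun a _ => ?_
    rw [Finset.mul_sum, Finset.mul_sum, Finset.mul_sum, ← Finset.sum_sub_distrib,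
      ← Finset.sum_add_distrib, ← Finset.sum_add_distrib]
    refine Finset.sum_congr rfl fun b _ => ?_
    rw [hPv, hPv, hRv, hRv]; ring
  have hC : 0 ≤ ∑ a : Fin n, ∑ b ∈ Finset.univ.erase a, H a b * (w a * w b) := hhigh
  nlinarith [mul_nonneg htk hSB, mul_nonneg htk hSB', mul_nonneg hkk hC]
end

section
/- Proposition 2 (the variance-reduced attack decreases interactions; precise second-order form): let n ≥ 2, ĝ ∈ ℝⁿ, and Ĥ a symmetric n × n real matrix. On a probability space, let (ε_a)_{1≤a≤n} together with (η_{ab})_{1≤a≤b≤n} be a jointly independent family of square-integrable real random variables, each with mean zero, and extend η by symmetry (η_{ba} = η_{ab}). Define the random gradient g_a = ĝ_a + ε_a and random Hessian H_{ab} = Ĥ_{ab} + η_{ab}. For fixed α ≥ 0 and natural number m ≥ 1, define the second-order total interaction functional S(u, M) = ∑_{a≠b} [α²·m²·u_a·u_b·M_{ab} + (α³·(m−1)·m²/2)·(u_a·M_{ab}·∑_{a'=1}^{n} M_{a'b}·u_{a'} + u_b·M_{ab}·∑_{b'=1}^{n} M_{ab'}·u_{b'})]. Then every summand of S(g, H)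 is integrable and S(ĝ, Ĥ) ≤ E[S(g, H)], i.e. the total second-order interaction computed from the smoothed (mean) gradient and Hessian is at most the expected total second-order interaction computed from the noisy gradient and Hessian. -/
/-!
The variables `ĝ_a + ε_a` and `Ĥ_{ab} + η_{ab}` (`a ≤ b`) form an independent family `W` with
means `ĝ_a`, `Ĥ_{ab}`. By symmetry of `H`, each summand of `S(g, H)` is a nonnegative
combination of the monomials `g_a g_b H_{ab}` and `g_x H_{xy} H_{zy} g_z` with `a ≠ b`, `x ≠ y`.
Except for `z = x`, these are products of distinct members of `W`, so their expectations are
the corresponding monomials in `ĝ, Ĥ`; for `z = x` the monomial is `g_x² H_{xy}²`, and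
`E[g_x²] E[H_{xy}²] ≥ ĝ_x² Ĥ_{xy}²` by Jensen. Summing gives `S(ĝ, Ĥ) ≤ E[S(g, H)]`.
-/

open MeasureTheory ProbabilityTheory Finset

/-- The second-order total interaction functional of Proposition 2:
`S(u, M) = ∑_{a≠b} [α²·m²·u_a·u_b·M_{ab}
  + (α³·(m−1)·m²/2)·(u_a·M_{ab}·∑_{a'} M_{a'b}·u_{a'} + u_b·M_{ab}·∑_{b'} M_{ab'}·u_{b'})]`. -/
noncomputable def totalSecondOrderInteraction (n : ℕ) (α : ℝ) (m : ℕ)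
    (u : Fin n → ℝ) (M : Fin n → Fin n → ℝ) : ℝ :=
  ∑ a : Fin n, ∑ b ∈ Finset.univ.erase a,
    (α ^ 2 * (m : ℝ) ^ 2 * (u a * u b * M a b) +
      (α ^ 3 * ((m : ℝ) - 1) * (m : ℝ) ^ 2 / 2) *
        (u a * M a b * ∑ a' : Fin n, M a' b * u a' +
          u b * M a b * ∑ b' : Fin n, M a b' * u b'))

def MeanGE {Ω : Type*} [MeasurableSpace Ω] (μ : Measure Ω) (f : Ω → ℝ) (c : ℝ) : Prop :=
  Integrable f μ ∧ c ≤ ∫ ω, f ω ∂μ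

namespace MeanGE

variable {Ω : Type*} [MeasurableSpace Ω] {μ : Measure Ω} {f g : Ω → ℝ} {c d : ℝ}

lemma of_integral_eq (hf : Integrable f μ) (h : ∫ ω, f ω ∂μ = c) : MeanGE μ f c :=
  ⟨hf, h.ge⟩

lemma add (hf : MeanGE μ f c) (hg : MeanGE μ g d) : MeanGE μ (fun ω => f ω + g ω) (c + d) :=
  ⟨hf.1.add hg.1, by rw [integral_add hf.1 hg.1]; exact add_le_add hf.2 hg.2⟩

lemma const_mul (hf : MeanGE μ f c) {k : ℝ} (hk : 0 ≤ k) :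
    MeanGE μ (fun ω => k * f ω) (k * c) :=
  ⟨hf.1.const_mul k, by rw [integral_const_mul]; exact mul_le_mul_of_nonneg_left hf.2 hk⟩

lemma finsetSum {ι : Type*} (s : Finset ι) {F : ι → Ω → ℝ} {C : ι → ℝ}
    (h : ∀ i ∈ s, MeanGE μ (F i) (C i)) :
    MeanGE μ (fun ω => ∑ i ∈ s, F i ω) (∑ i ∈ s, C i) :=
  ⟨integrable_finsetSum s fun i hi => (h i hi).1, by
    rw [integral_finsetSum s fun i hi => (h i hi).1]
    exact sum_le_sum fun i hi => (h i hi).2⟩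

end MeanGE

lemma sq_integral_le_integral_sq {Ω : Type*} [MeasurableSpace Ω] {μ : Measure Ω}
    [IsProbabilityMeasure μ] {X : Ω → ℝ} (hX : MemLp X 2 μ) :
    (∫ ω, X ω ∂μ) ^ 2 ≤ ∫ ω, X ω ^ 2 ∂μ := by
  have h := variance_nonneg X μ
  rw [variance_eq_sub hX] at h
  simpa using h

lemma ProbabilityTheory.IndepFun.meanGE_sq_mul_sq {Ω : Type*} [MeasurableSpace Ω]
    {μ : Measure Ω} [IsProbabilityMeasure μ] {X Y : Ω → ℝ} (h : IndepFun X Y μ)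
    (hX : MemLp X 2 μ) (hY : MemLp Y 2 μ) :
    MeanGE μ (fun ω => X ω ^ 2 * Y ω ^ 2) ((∫ ω, X ω ∂μ) ^ 2 * (∫ ω, Y ω ∂μ) ^ 2) := by
  have hsq : IndepFun (fun ω => X ω ^ 2) (fun ω => Y ω ^ 2) μ :=
    h.comp (measurable_id.pow_const 2) (measurable_id.pow_const 2)
  refine ⟨hsq.integrable_mul hX.integrable_sq hY.integrable_sq, ?_⟩
  rw [hsq.integral_fun_mul_eq_mul_integral hX.integrable_sq.1 hY.integrable_sq.1]
  exact mul_le_mul (sq_integral_le_integral_sq hX) (sq_integral_le_integral_sq hY)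
    (sq_nonneg _) (integral_nonneg fun ω => sq_nonneg _)

namespace ProbabilityTheory.iIndepFun

variable {Ω ι : Type*} [MeasurableSpace Ω] {μ : Measure Ω} {X : ι → Ω → ℝ}

lemma integrable_finsetProd (h : iIndepFun X μ) (hX : ∀ i, Integrable (X i) μ)
    (s : Finset ι) : Integrable (fun ω => ∏ i ∈ s, X i ω) μ := by
  classical
  have := h.isProbabilityMeasure
  induction s using Finset.induction_on with
  | empty => simp
  | insert i s hi ih =>
    have hind := h.indepFun_finsetProd_of_notMem₀ (fun j => (hX j).aemeasurable) hi
    convert hind.symm.integrable_mul (hX i) (by rwa [prod_fn]) using 1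
    ext ω
    simp [prod_insert hi]

lemma integral_finsetProd (h : iIndepFun X μ) (hX : ∀ i, AEStronglyMeasurable (X i) μ)
    (s : Finset ι) : ∫ ω, ∏ i ∈ s, X i ω ∂μ = ∏ i ∈ s, ∫ ω, X i ω ∂μ := by
  have hs := (h.precomp Subtype.val_injective).integral_fun_prod_eq_prod_integral
    (fun i : s => hX i)
  have hprod : ∀ ω, ∏ i : s, X i ω = ∏ i ∈ s, X i ω := fun ω => prod_coe_sort s (X · ω)
  simpa only [hprod, prod_coe_sort s fun i => ∫ ω, X i ω ∂μ] using hs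

lemma meanGE_finsetProd (h : iIndepFun X μ) (hX : ∀ i, Integrable (X i) μ) (s : Finset ι) :
    MeanGE μ (fun ω => ∏ i ∈ s, X i ω) (∏ i ∈ s, ∫ ω, X i ω ∂μ) :=
  .of_integral_eq (h.integrable_finsetProd hX s)
    (h.integral_finsetProd (fun i => (hX i).1) s)

lemma meanGE_mul_mul_mul_self [IsProbabilityMeasure μ] (h : iIndepFun X μ)
    (hX : ∀ i, MemLp (X i) 2 μ) {i j : ι} (hij : i ≠ j) :
    MeanGE μ (fun ω => X i ω * X j ω * (X j ω * X i ω))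
      ((∫ ω, X i ω ∂μ) * (∫ ω, X j ω ∂μ) * ((∫ ω, X j ω ∂μ) * ∫ ω, X i ω ∂μ)) := by
  convert (h.indepFun hij).meanGE_sq_mul_sq (hX i) (hX j) using 1 <;> ring_nf

end ProbabilityTheory.iIndepFun

section SortedPair

variable {α β : Type*} [LinearOrder α]

/-- The unordered pair `{a, b}`, as it indexes the family `(η_{ab})_{a ≤ b}`. -/
def sortedPair (a b : α) : {p : α × α // p.1 ≤ p.2} :=
  ⟨(min a b, max a b), min_le_max⟩

lemma sortedPair_comm (a b : α) : sortedPair a b = sortedPair b a := by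
  simp [sortedPair, min_comm, max_comm]

lemma sortedPair_left_injective (b : α) : Function.Injective (sortedPair · b) := by
  intro a c h
  simp only [sortedPair, Subtype.mk.injEq, Prod.mk.injEq] at h
  grind

lemma apply_sortedPair_of_symm (f : α → α → β) (hf : ∀ a b, f b a = f a b) (a b : α) :
    f (sortedPair a b).1.1 (sortedPair a b).1.2 = f a b := by
  rcases le_total a b with h | h <;> simp [sortedPair, h, hf]

end SortedPair

section Interaction

variable {n : ℕ}

noncomputable def interactionTerm (α : ℝ) (m : ℕ) (u : Fin n → ℝ) (M : Fin n → Fin n → ℝ)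
    (a b : Fin n) : ℝ :=
  α ^ 2 * (m : ℝ) ^ 2 * (u a * u b * M a b) +
    (α ^ 3 * ((m : ℝ) - 1) * (m : ℝ) ^ 2 / 2) *
      (u a * M a b * ∑ a' : Fin n, M a' b * u a' +
        u b * M a b * ∑ b' : Fin n, M a b' * u b')

lemma totalSecondOrderInteraction_eq_sum (α : ℝ) (m : ℕ) (u : Fin n → ℝ)
    (M : Fin n → Fin n → ℝ) :
    totalSecondOrderInteraction n α m u M =
      ∑ a : Fin n, ∑ b ∈ univ.erase a, interactionTerm α m u M a b :=
  rfl

lemma interactionTerm_eq_of_symm (α : ℝ) (m : ℕ) (u : Fin n → ℝ) {M : Fin n → Fin n → ℝ}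
    (hM : ∀ a b, M b a = M a b) (a b : Fin n) :
    interactionTerm α m u M a b =
      α ^ 2 * (m : ℝ) ^ 2 * (u a * u b * M a b) +
        (α ^ 3 * ((m : ℝ) - 1) * (m : ℝ) ^ 2 / 2) *
          (∑ z, u a * M a b * (M z b * u z) + ∑ z, u b * M b a * (M z a * u z)) := by
  simp only [interactionTerm, mul_sum, hM a b, hM a]

lemma interactionCoeff_nonneg {α : ℝ} (hα : 0 ≤ α) (m : ℕ) :
    0 ≤ α ^ 3 * ((m : ℝ) - 1) * (m : ℝ) ^ 2 / 2 := by
  rcases m with _ | m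
  · simp
  · rw [Nat.cast_succ, add_sub_cancel_right]
    positivity

variable {Ω : Type*} [MeasurableSpace Ω] {μ : Measure Ω}

lemma meanGE_interactionTerm {α : ℝ} (hα : 0 ≤ α) (m : ℕ)
    {U : Ω → Fin n → ℝ} {M : Ω → Fin n → Fin n → ℝ} {u : Fin n → ℝ} {M₀ : Fin n → Fin n → ℝ}
    (hM : ∀ ω a b, M ω b a = M ω a b) (hM₀ : ∀ a b, M₀ b a = M₀ a b)
    (htriple : ∀ a b, a ≠ b →
      MeanGE μ (fun ω => U ω a * U ω b * M ω a b) (u a * u b * M₀ a b))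
    (hquad : ∀ x y z, x ≠ y →
      MeanGE μ (fun ω => U ω x * M ω x y * (M ω z y * U ω z))
        (u x * M₀ x y * (M₀ z y * u z)))
    {a b : Fin n} (hab : a ≠ b) :
    MeanGE μ (fun ω => interactionTerm α m (U ω) (M ω) a b) (interactionTerm α m u M₀ a b) := by
  simp only [interactionTerm_eq_of_symm α m _ (hM _), interactionTerm_eq_of_symm α m u hM₀]
  exact ((htriple a b hab).const_mul (by positivity)).add
    (((MeanGE.finsetSum _ fun z _ => hquad a b z hab).add
      (MeanGE.finsetSum _ fun z _ => hquad b a z hab.symm)).const_mul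
        (interactionCoeff_nonneg hα m))

end Interaction

section NoiseModel

variable {n : ℕ} {Ω : Type*} [MeasurableSpace Ω] {μ : Measure Ω}
  {W : Fin n ⊕ {p : Fin n × Fin n // p.1 ≤ p.2} → Ω → ℝ}
  {c : Fin n ⊕ {p : Fin n × Fin n // p.1 ≤ p.2} → ℝ}

lemma meanGE_grad_grad_hess (hW : iIndepFun W μ) (hW1 : ∀ i, Integrable (W i) μ)
    (hc : ∀ i, ∫ ω, W i ω ∂μ = c i) {a b : Fin n} (hab : a ≠ b) :
    MeanGE μ (fun ω => W (.inl a) ω * W (.inl b) ω * W (.inr (sortedPair a b)) ω)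
      (c (.inl a) * c (.inl b) * c (.inr (sortedPair a b))) := by
  convert hW.meanGE_finsetProd hW1 {.inl a, .inl b, .inr (sortedPair a b)} using 1
  · ext ω
    simp [prod_insert, hab, mul_assoc]
  · simp [prod_insert, hab, hc, mul_assoc]

lemma meanGE_grad_hess_hess_grad [IsProbabilityMeasure μ] (hW : iIndepFun W μ)
    (hW2 : ∀ i, MemLp (W i) 2 μ) (hc : ∀ i, ∫ ω, W i ω ∂μ = c i) {x y : Fin n} (hxy : x ≠ y)
    (z : Fin n) :
    MeanGE μ (fun ω => W (.inl x) ω * W (.inr (sortedPair x y)) ω *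
        (W (.inr (sortedPair z y)) ω * W (.inl z) ω))
      (c (.inl x) * c (.inr (sortedPair x y)) * (c (.inr (sortedPair z y)) * c (.inl z))) := by
  rcases eq_or_ne z x with rfl | hzx
  · simpa only [hc] using hW.meanGE_mul_mul_mul_self hW2 Sum.inl_ne_inr
  have hpair : sortedPair x y ≠ sortedPair z y := fun h =>
    hzx (sortedPair_left_injective y h).symm
  convert hW.meanGE_finsetProd (fun i => (hW2 i).integrable one_le_two)
    {.inl x, .inr (sortedPair x y), .inr (sortedPair z y), .inl z} using 1
  · ext ω
    simp [prod_insert, hzx.symm, hpair, mul_assoc]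
  · simp [prod_insert, hzx.symm, hpair, hc, mul_assoc]

lemma meanGE_interactionTerm_of_iIndepFun [IsProbabilityMeasure μ] (hW : iIndepFun W μ)
    (hW2 : ∀ i, MemLp (W i) 2 μ) (hc : ∀ i, ∫ ω, W i ω ∂μ = c i) {α : ℝ} (hα : 0 ≤ α)
    (m : ℕ) {a b : Fin n} (hab : a ≠ b) :
    MeanGE μ
      (fun ω => interactionTerm α m (fun a => W (.inl a) ω)
        (fun a b => W (.inr (sortedPair a b)) ω) a b)
      (interactionTerm α m (fun a => c (.inl a)) (fun a b => c (.inr (sortedPair a b))) a b) :=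
  meanGE_interactionTerm hα m (fun ω a b => by rw [sortedPair_comm])
    (fun a b => by rw [sortedPair_comm])
    (fun _ _ => meanGE_grad_grad_hess hW (fun i => (hW2 i).integrable one_le_two) hc)
    (fun _ _ z hxy => meanGE_grad_hess_hess_grad hW hW2 hc hxy z) hab

end NoiseModel

theorem vr_attack_decreases_interaction_general (n : ℕ)
    (ghat : Fin n → ℝ) (Hhat : Matrix (Fin n) (Fin n) ℝ)
    (hHsymm : ∀ a b, Hhat a b = Hhat b a)
    {Ω : Type*} [MeasurableSpace Ω] (μ : Measure Ω) [IsProbabilityMeasure μ]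
    (ε : Fin n → Ω → ℝ) (η : Fin n → Fin n → Ω → ℝ)
    (hηsymm : ∀ a b, η b a = η a b)
    (hindep : iIndepFun
      (Sum.elim ε (fun p : {p : Fin n × Fin n // p.1 ≤ p.2} => η p.1.1 p.1.2)) μ)
    (hε2 : ∀ a, MemLp (ε a) 2 μ) (hεmean : ∀ a, ∫ ω, ε a ω ∂μ = 0)
    (hη2 : ∀ a b, MemLp (η a b) 2 μ) (hηmean : ∀ a b, ∫ ω, η a b ω ∂μ = 0)
    (α : ℝ) (hα : 0 ≤ α) (m : ℕ) :
    (∀ a b : Fin n, a ≠ b →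
      Integrable (fun ω =>
        α ^ 2 * (m : ℝ) ^ 2 *
            ((ghat a + ε a ω) * (ghat b + ε b ω) * (Hhat a b + η a b ω)) +
          (α ^ 3 * ((m : ℝ) - 1) * (m : ℝ) ^ 2 / 2) *
            ((ghat a + ε a ω) * (Hhat a b + η a b ω) *
                ∑ a' : Fin n, (Hhat a' b + η a' b ω) * (ghat a' + ε a' ω) +
              (ghat b + ε b ω) * (Hhat a b + η a b ω) *
                ∑ b' : Fin n, (Hhat a b' + η a b' ω) * (ghat b' + ε b' ω))) μ) ∧
    totalSecondOrderInteraction n α m ghat (fun a b => Hhat a b) ≤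
      ∫ ω, totalSecondOrderInteraction n α m (fun a => ghat a + ε a ω)
        (fun a b => Hhat a b + η a b ω) ∂μ := by
  let Y := Sum.elim ε (fun p : {p : Fin n × Fin n // p.1 ≤ p.2} => η p.1.1 p.1.2)
  let C := Sum.elim ghat (fun p : {p : Fin n × Fin n // p.1 ≤ p.2} => Hhat p.1.1 p.1.2)
  have hY2 : ∀ i, MemLp (Y i) 2 μ := by rintro (a | p); exacts [hε2 a, hη2 _ _]
  have hYmean : ∀ i, ∫ ω, Y i ω ∂μ = 0 := by rintro (a | p); exacts [hεmean a, hηmean _ _]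
  have hW : iIndepFun (fun i ω => C i + Y i ω) μ :=
    hindep.comp (fun i x => C i + x) fun i => measurable_const_add (C i)
  have hW2 : ∀ i, MemLp (fun ω => C i + Y i ω) 2 μ := fun i =>
    (memLp_const (C i)).add (hY2 i)
  have hc : ∀ i, ∫ ω, C i + Y i ω ∂μ = C i := fun i => by
    rw [integral_add (integrable_const _) ((hY2 i).integrable one_le_two), hYmean]
    simp
  have hM : ∀ ω, (fun a b => C (.inr (sortedPair a b)) + Y (.inr (sortedPair a b)) ω) =
      fun a b => Hhat a b + η a b ω := fun ω => funext₂ <|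
    apply_sortedPair_of_symm (fun a b => Hhat a b + η a b ω) fun a b => by rw [hHsymm, hηsymm]
  have hM₀ : (fun a b => C (.inr (sortedPair a b))) = fun a b => Hhat a b :=
    funext₂ <| apply_sortedPair_of_symm (fun a b => Hhat a b) fun a b => hHsymm b a
  have key : ∀ a b : Fin n, a ≠ b → MeanGE μ
      (fun ω => interactionTerm α m (fun a => ghat a + ε a ω) (fun a b => Hhat a b + η a b ω) a b)
      (interactionTerm α m ghat (fun a b => Hhat a b) a b) := fun a b hab => by
    have h := meanGE_interactionTerm_of_iIndepFun hW hW2 hc hα m hab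
    simp only [hM, hM₀] at h
    exact h
  refine ⟨fun a b hab => (key a b hab).1, ?_⟩
  simp only [totalSecondOrderInteraction_eq_sum]
  exact (MeanGE.finsetSum _ fun a _ =>
    MeanGE.finsetSum _ fun b hb => key a b (ne_of_mem_erase hb).symm).2

/-- Proposition 2 (the variance-reduced attack decreases interactions; precise second-order
form): with smoothed gradient `ĝ` (`ghat`) and symmetric smoothed Hessian `Ĥ` (`Hhat`), and
noisy versions `g_a = ĝ_a + ε_a`, `H_{ab} = Ĥ_{ab} + η_{ab}` where the `ε_a` together with
the `η_{ab}` (for `a ≤ b`, extended by symmetry) form a jointly independent family of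
square-integrable mean-zero random variables, every summand of `S(g, H)` is integrable and
`S(ĝ, Ĥ) ≤ E[S(g, H)]`. -/
theorem vr_attack_decreases_interaction (n : ℕ) (hn : 2 ≤ n)
    (ghat : Fin n → ℝ) (Hhat : Matrix (Fin n) (Fin n) ℝ)
    (hHsymm : ∀ a b, Hhat a b = Hhat b a)
    {Ω : Type*} [MeasurableSpace Ω] (μ : Measure Ω) [IsProbabilityMeasure μ]
    (ε : Fin n → Ω → ℝ) (η : Fin n → Fin n → Ω → ℝ)
    (hηsymm : ∀ a b, η b a = η a b)
    (hindep : iIndepFun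
      (Sum.elim ε (fun p : {p : Fin n × Fin n // p.1 ≤ p.2} => η p.1.1 p.1.2)) μ)
    (hε2 : ∀ a, MemLp (ε a) 2 μ) (hεmean : ∀ a, ∫ ω, ε a ω ∂μ = 0)
    (hη2 : ∀ a b, MemLp (η a b) 2 μ) (hηmean : ∀ a b, ∫ ω, η a b ω ∂μ = 0)
    (α : ℝ) (hα : 0 ≤ α) (m : ℕ) (hm : 1 ≤ m) :
    (∀ a b : Fin n, a ≠ b →
      Integrable (fun ω =>
        α ^ 2 * (m : ℝ) ^ 2 *
            ((ghat a + ε a ω) * (ghat b + ε b ω) * (Hhat a b + η a b ω)) +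
          (α ^ 3 * ((m : ℝ) - 1) * (m : ℝ) ^ 2 / 2) *
            ((ghat a + ε a ω) * (Hhat a b + η a b ω) *
                ∑ a' : Fin n, (Hhat a' b + η a' b ω) * (ghat a' + ε a' ω) +
              (ghat b + ε b ω) * (Hhat a b + η a b ω) *
                ∑ b' : Fin n, (Hhat a b' + η a b' ω) * (ghat b' + ε b' ω))) μ) ∧
    totalSecondOrderInteraction n α m ghat (fun a b => Hhat a b) ≤
      ∫ ω, totalSecondOrderInteraction n α m (fun a => ghat a + ε a ω)
        (fun a b => Hhat a b + η a b ω) ∂μ :=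
  vr_attack_decreases_interaction_general n ghat Hhat hHsymm μ ε η hηsymm hindep hε2 hεmean hη2
    hηmean α hα m
end
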